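/- For any two-qubit X-state ρ_AB with Hamiltonian H_AB = ε^A σ₃⊗I + ε^B I⊗σ₃ + γ σ₁⊗σ₁ (ε^A ≥ ε^B ≥ 0, γ ≥ 0), the battery capacities satisfy the monogamy relation C(ρ_A; H_A) + C(ρ_B; H_B) ≤ C(ρ_AB; H_AB), where H_A = ε^A σ₃, H_B = ε^B σ₃. -/

import Mathlib

open Matrix Finset
open scoped Kronecker

/-- Sort a finite real vector in descending order. -/
noncomputable def dsort {d : ℕ} (v : Fin d → ℝ) : Fin d → ℝ :=
  fun i => v (Tuple.sort v i.rev)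

/-- Battery capacity functional for descending-ordered vectors:
`cap λ ε = ∑ i, ε i * (λ i - λ (d-1-i))`. -/
noncomputable def cap {d : ℕ} (lam eps : Fin d → ℝ) : ℝ :=
  ∑ i, eps i * (lam i - lam i.rev)

/-- Eigenvalues of a Hermitian matrix, in descending order. -/
noncomputable def eigsDesc {m : Type*} [Fintype m] [DecidableEq m] {A : Matrix m m ℂ}
    (hA : A.IsHermitian) : Fin (Fintype.card m) → ℝ :=
  dsort (hA.eigenvalues ∘ (Fintype.equivFin m).symm)

open scoped Classical in
/-- Quantum battery capacity `C(ρ; H)` (defaults to `0` on non-Hermitian inputs). -/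
noncomputable def Cap {m : Type*} [Fintype m] [DecidableEq m] (ρ H : Matrix m m ℂ) : ℝ :=
  if hρ : ρ.IsHermitian then
    if hH : H.IsHermitian then cap (eigsDesc hρ) (eigsDesc hH) else 0
  else 0

/-- Majorization `x ≺ y` of real vectors. -/
noncomputable def Maj {d : ℕ} (x y : Fin d → ℝ) : Prop :=
  (∀ k : ℕ, ∑ i : Fin d, (if (i : ℕ) < k then dsort x i else 0)
      ≤ ∑ i : Fin d, (if (i : ℕ) < k then dsort y i else 0)) ∧
  ∑ i, x i = ∑ i, y i

def σ1 : Matrix (Fin 2) (Fin 2) ℂ := !![0, 1; 1, 0]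
def σ3 : Matrix (Fin 2) (Fin 2) ℂ := !![1, 0; 0, -1]

open scoped ComplexOrder

/-- The two-qubit Hamiltonian of Eq. (3). -/
noncomputable def HAB (eA eB g : ℝ) : Matrix (Fin 2 × Fin 2) (Fin 2 × Fin 2) ℂ :=
  (eA : ℂ) • (σ3 ⊗ₖ (1 : Matrix (Fin 2) (Fin 2) ℂ)) +
  (eB : ℂ) • ((1 : Matrix (Fin 2) (Fin 2) ℂ) ⊗ₖ σ3) +
  (g : ℂ) • (σ1 ⊗ₖ σ1)

/-- Partial trace over the second qubit. -/
noncomputable def ptA (ρ : Matrix (Fin 2 × Fin 2) (Fin 2 × Fin 2) ℂ) :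
    Matrix (Fin 2) (Fin 2) ℂ :=
  fun a c => ∑ b : Fin 2, ρ (a, b) (c, b)

/-- Partial trace over the first qubit. -/
noncomputable def ptB (ρ : Matrix (Fin 2 × Fin 2) (Fin 2 × Fin 2) ℂ) :
    Matrix (Fin 2) (Fin 2) ℂ :=
  fun b d => ∑ a : Fin 2, ρ (a, b) (a, d)

/-!
An X-state, and likewise `HAB`, is block diagonal once the basis is reordered as
`(00, 11 | 01, 10)`, so its spectrum is that of two Hermitian `2 × 2` blocks. Writing
`u = ρ₀₀,₀₀ - ρ₁₁,₁₁` and `v = ρ₀₁,₀₁ - ρ₁₀,₁₀`, the two eigenvalues of the blocks of `ρ` differ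
by at least `|u|` and `|v|`, and `HAB` has eigenvalues `±s₀, ±s₁` with
`s₀ = √((εA + εB)² + γ²) ≥ εA + εB` and `s₁ = √((εA - εB)² + γ²) ≥ εA - εB`.
The reduced states are diagonal with population differences `u + v` and `u - v`, so the left side
is `2εA|u + v| + 2εB|u - v| ≤ 2((εA + εB) max(|u|, |v|) + (εA - εB) min(|u|, |v|))`.
The right side is `2(s₀ G₀ + s₁ G₁)`, where `G₀ = λ₀ - λ₃ ≥ max(|u|, |v|)` and
`G₀ + G₁ = (λ₀ + λ₁) - (λ₂ + λ₃) ≥ |u| + |v|` for the sorted eigenvalues `λ` of `ρ`; since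
`s₀ ≥ s₁ ≥ 0`, a rearrangement inequality concludes.
-/

section Sorting

variable {d : ℕ}

theorem antitone_dsort (v : Fin d → ℝ) : Antitone (dsort v) :=
  fun _ _ hij => Tuple.monotone_sort v (Fin.rev_le_rev.mpr hij)

theorem exists_perm_dsort_apply (v : Fin d → ℝ) :
    ∃ σ : Equiv.Perm (Fin d), ∀ i, dsort v (σ i) = v i :=
  ⟨(Fin.revPerm.trans (Tuple.sort v)).symm, fun i => by simp [dsort]⟩

theorem dsort_congr {v w : Fin d → ℝ} (h : (List.ofFn v).Perm (List.ofFn w)) :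
    dsort v = dsort w := by
  have hsort : v ∘ Tuple.sort v = w ∘ Tuple.sort w :=
    List.ofFn_injective <| List.Perm.eq_of_sortedLE (Tuple.monotone_sort v).sortedLE_ofFn
      (Tuple.monotone_sort w).sortedLE_ofFn <|
      ((Equiv.Perm.ofFn_comp_perm _ v).trans h).trans (Equiv.Perm.ofFn_comp_perm _ w).symm
  funext i
  exact congrFun hsort i.rev

theorem dsort_eq_self {v : Fin d → ℝ} (hv : Antitone v) : dsort v = v := by
  have hsort : v ∘ Fin.revPerm = v ∘ Tuple.sort v :=
    Tuple.comp_sort_eq_comp_iff_monotone.mpr fun i j hij => hv (Fin.rev_le_rev.mpr hij)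
  funext i
  simpa [dsort] using (congrFun hsort i.rev).symm

theorem dsort_pair (p q : ℝ) : dsort ![p, q] = ![max p q, min p q] := by
  have hperm : (List.ofFn ![p, q]).Perm (List.ofFn ![max p q, min p q]) := by
    rcases le_total p q with h | h
    · simpa [max_eq_right h, min_eq_left h] using List.Perm.swap q p []
    · simp [max_eq_left h, min_eq_right h]
  rw [dsort_congr hperm, dsort_eq_self]
  intro i j hij
  fin_cases i <;> fin_cases j <;> simp_all

open Polynomial in
theorem dsort_eq_of_forall_prod_sub_eq {v w : Fin d → ℝ}
    (h : ∀ x : ℝ, ∏ i, (x - v i) = ∏ i, (x - w i)) : dsort v = dsort w := by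
  have hpoly : (Multiset.map (fun a => X - C a) (List.ofFn v : Multiset ℝ)).prod
      = (Multiset.map (fun a => X - C a) (List.ofFn w : Multiset ℝ)).prod := by
    refine Polynomial.funext fun x => ?_
    simpa [List.prod_ofFn, eval_prod] using h x
  have := congrArg roots hpoly
  rw [roots_multiset_prod_X_sub_C, roots_multiset_prod_X_sub_C] at this
  exact dsort_congr (Multiset.coe_eq_coe.mp this)

end Sorting

theorem Antitone.add_le_apply_zero_add_apply_one {α : Type*} [AddCommMonoid α] [PartialOrder α]
    [IsOrderedAddMonoid α] {n : ℕ} {f : Fin (n + 2) → α} (hf : Antitone f) {i j : Fin (n + 2)}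
    (hij : i ≠ j) : f i + f j ≤ f 0 + f 1 := by
  wlog h : i < j generalizing i j
  · rw [add_comm]
    exact this hij.symm (hij.symm.lt_of_le (not_lt.mp h))
  refine add_le_add (hf (Fin.zero_le i)) (hf ?_)
  rw [Fin.lt_def] at h
  rw [Fin.le_def, Fin.val_one]
  omega

theorem Antitone.apply_rev_one_add_apply_rev_zero_le {α : Type*} [AddCommMonoid α] [PartialOrder α]
    [IsOrderedAddMonoid α] {n : ℕ} {f : Fin (n + 2) → α} (hf : Antitone f) {i j : Fin (n + 2)}
    (hij : i ≠ j) : f (Fin.rev 1) + f (Fin.rev 0) ≤ f i + f j := by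
  have hdual : Antitone fun k : Fin (n + 2) => OrderDual.toDual (f k.rev) :=
    fun _ _ hab => hf (Fin.rev_le_rev.mpr hab)
  have h := hdual.add_le_apply_zero_add_apply_one (Fin.rev_injective.ne hij)
  rw [← toDual_add, ← toDual_add, OrderDual.toDual_le_toDual] at h
  simpa [add_comm] using h

theorem sub_le_dsort_zero_sub_dsort_rev_zero {n : ℕ} (v : Fin (n + 1) → ℝ) (i j : Fin (n + 1)) :
    v i - v j ≤ dsort v 0 - dsort v (Fin.rev 0) := by
  obtain ⟨σ, hσ⟩ := exists_perm_dsort_apply v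
  rw [← hσ i, ← hσ j]
  exact sub_le_sub (antitone_dsort v (Fin.zero_le _)) (antitone_dsort v (by simp [Fin.le_last]))

theorem add_sub_add_le_dsort {n : ℕ} (v : Fin (n + 2) → ℝ) {i j k l : Fin (n + 2)} (hij : i ≠ j)
    (hkl : k ≠ l) : v i + v j - (v k + v l) ≤
      dsort v 0 + dsort v 1 - (dsort v (Fin.rev 1) + dsort v (Fin.rev 0)) := by
  obtain ⟨σ, hσ⟩ := exists_perm_dsort_apply v
  rw [← hσ i, ← hσ j, ← hσ k, ← hσ l]
  exact sub_le_sub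
    (Antitone.add_le_apply_zero_add_apply_one (antitone_dsort v) (σ.injective.ne hij))
    (Antitone.apply_rev_one_add_apply_rev_zero_le (antitone_dsort v) (σ.injective.ne hkl))

theorem eigsDesc_eq_dsort {m : Type*} [Fintype m] [DecidableEq m] {A : Matrix m m ℂ}
    (hA : A.IsHermitian) {w : Fin (Fintype.card m) → ℝ}
    (hw : ∀ x : ℝ, A.charpoly.eval (x : ℂ) = ∏ i, ((x : ℂ) - w i)) :
    eigsDesc hA = dsort w := by
  refine dsort_eq_of_forall_prod_sub_eq fun x => ?_
  have h := hw x
  rw [hA.charpoly_eq, Polynomial.eval_prod, ← (Fintype.equivFin m).symm.prod_comp] at h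
  simp only [Polynomial.eval_sub, Polynomial.eval_X, Polynomial.eval_C] at h
  simp only [Function.comp_apply, RCLike.ofReal_eq_complex_ofReal] at h ⊢
  exact_mod_cast h

theorem eigsDesc_eq_dsort_of_offDiag_eq_zero {M : Matrix (Fin 2) (Fin 2) ℂ} (hM : M.IsHermitian)
    (h01 : M 0 1 = 0) : eigsDesc hM = dsort ![(M 0 0).re, (M 1 1).re] := by
  refine eigsDesc_eq_dsort hM fun x => ?_
  have h10 : M 1 0 = 0 := by rw [← hM.apply 1 0, h01, star_zero]
  have hdiag (i) : ((M i i).re : ℂ) = M i i := hM.coe_re_apply_self i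
  change _ = ∏ i : Fin 2, ((x : ℂ) - ![(M 0 0).re, (M 1 1).re] i)
  rw [eval_charpoly, det_fin_two, Fin.prod_univ_two]
  simp [h01, h10, hdiag]

def IsXShaped {R : Type*} [Zero R] (M : Matrix (Fin 2 × Fin 2) (Fin 2 × Fin 2) R) : Prop :=
  ∀ i j, M i j ≠ 0 → i = j ∨ (i.1 ≠ j.1 ∧ i.2 ≠ j.2)

theorem IsXShaped.apply_eq_zero {R : Type*} [Zero R]
    {M : Matrix (Fin 2 × Fin 2) (Fin 2 × Fin 2) R} (hM : IsXShaped M) {i j : Fin 2 × Fin 2}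
    (hij : i ≠ j) (h : i.1 = j.1 ∨ i.2 = j.2) : M i j = 0 := by
  by_contra hne
  rcases hM i j hne with h' | ⟨h₁, h₂⟩
  · exact hij h'
  · exact h.elim h₁ h₂

theorem IsXShaped.scalar_sub {R : Type*} [Ring R] {M : Matrix (Fin 2 × Fin 2) (Fin 2 × Fin 2) R}
    (hM : IsXShaped M) (x : R) : IsXShaped (scalar _ x - M) := by
  intro i j hij
  rcases eq_or_ne i j with rfl | hne
  · exact .inl rfl
  · exact hM i j fun h => hij (by simp [hne, h])

theorem IsXShaped.det_eq {R : Type*} [CommRing R] {M : Matrix (Fin 2 × Fin 2) (Fin 2 × Fin 2) R}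
    (hM : IsXShaped M) :
    M.det = (M (0, 0) (0, 0) * M (1, 1) (1, 1) - M (0, 0) (1, 1) * M (1, 1) (0, 0)) *
      (M (0, 1) (0, 1) * M (1, 0) (1, 0) - M (0, 1) (1, 0) * M (1, 0) (0, 1)) := by
  -- `e (a, b) = (a, a + b)`: the block index of `blockDiagonal` is the parity `a + b`.
  let e : Fin 2 × Fin 2 ≃ Fin 2 × Fin 2 := Equiv.prodShear (Equiv.refl _) Equiv.addLeft
  have hblock : reindex e e M =
      blockDiagonal fun k => of fun i j => M (e.symm (i, k)) (e.symm (j, k)) := by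
    ext ⟨i, k⟩ ⟨j, k'⟩
    rcases eq_or_ne k k' with rfl | hk
    · simp
    · rw [blockDiagonal_apply_ne _ _ _ hk, reindex_apply, submatrix_apply]
      by_contra h
      revert hk
      rcases hM _ _ h with h | h <;> revert h <;>
        fin_cases i <;> fin_cases j <;> fin_cases k <;> fin_cases k' <;> decide
  rw [← det_reindex_self e, hblock, det_blockDiagonal, Fin.prod_univ_two, det_fin_two, det_fin_two]
  simp [e, show (-1 : Fin 2) = 1 from rfl]

/-- `(p + q) / 2 ± eigRadius p q z` are the eigenvalues of the Hermitian matrix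
`!![p, z; conj z, q]`. -/
noncomputable def eigRadius (p q : ℝ) (z : ℂ) : ℝ := √(((p - q) / 2) ^ 2 + Complex.normSq z)

theorem sub_mul_sub_eigRadius (p q x : ℝ) (z : ℂ) :
    (x - ((p + q) / 2 + eigRadius p q z)) * (x - ((p + q) / 2 - eigRadius p q z)) =
      (x - p) * (x - q) - Complex.normSq z := by
  have h := Real.sq_sqrt (add_nonneg (sq_nonneg ((p - q) / 2)) (Complex.normSq_nonneg z))
  rw [eigRadius]
  linear_combination -h

theorem abs_sub_le_two_mul_eigRadius (p q : ℝ) (z : ℂ) : |p - q| ≤ 2 * eigRadius p q z := by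
  have h := Real.abs_le_sqrt (le_add_of_nonneg_right (Complex.normSq_nonneg z) :
    ((p - q) / 2) ^ 2 ≤ ((p - q) / 2) ^ 2 + Complex.normSq z)
  rw [abs_div, abs_two] at h
  rw [eigRadius]
  linarith

theorem eigRadius_neg (p : ℝ) (z : ℂ) : eigRadius p (-p) z = √(p ^ 2 + Complex.normSq z) := by
  rw [eigRadius]
  ring_nf

noncomputable def xSpectrum (M : Matrix (Fin 2 × Fin 2) (Fin 2 × Fin 2) ℂ) : Fin 4 → ℝ :=
  let a := (M (0, 0) (0, 0)).re
  let d := (M (1, 1) (1, 1)).re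
  let b := (M (0, 1) (0, 1)).re
  let c := (M (1, 0) (1, 0)).re
  ![(a + d) / 2 + eigRadius a d (M (0, 0) (1, 1)), (a + d) / 2 - eigRadius a d (M (0, 0) (1, 1)),
    (b + c) / 2 + eigRadius b c (M (0, 1) (1, 0)), (b + c) / 2 - eigRadius b c (M (0, 1) (1, 0))]

theorem eigsDesc_eq_dsort_xSpectrum {M : Matrix (Fin 2 × Fin 2) (Fin 2 × Fin 2) ℂ}
    (hM : M.IsHermitian) (hX : IsXShaped M) : eigsDesc hM = dsort (xSpectrum M) := by
  refine eigsDesc_eq_dsort hM fun x => ?_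
  have hdiag (i) : ((M i i).re : ℂ) = M i i := hM.coe_re_apply_self i
  have hnormSq (i j) : M i j * M j i = Complex.normSq (M i j) := by
    rw [← Complex.mul_conj, ← hM.apply j i]
    rfl
  have hreal : ∏ i, (x - xSpectrum M i) =
      ((x - (M (0, 0) (0, 0)).re) * (x - (M (1, 1) (1, 1)).re) -
        Complex.normSq (M (0, 0) (1, 1))) *
      ((x - (M (0, 1) (0, 1)).re) * (x - (M (1, 0) (1, 0)).re) -
        Complex.normSq (M (0, 1) (1, 0))) := by
    rw [Fin.prod_univ_four, ← sub_mul_sub_eigRadius, ← sub_mul_sub_eigRadius]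
    simp only [xSpectrum, Matrix.cons_val]
    ring
  rw [eval_charpoly, (hX.scalar_sub _).det_eq]
  change _ = ∏ i : Fin 4, ((x : ℂ) - xSpectrum M i)
  simp only [← Complex.ofReal_sub, ← Complex.ofReal_prod, hreal]
  push_cast
  simp [hnormSq, hdiag]

theorem cap_two (lam eps : Fin 2 → ℝ) :
    cap lam eps = eps 0 * (lam 0 - lam 1) + eps 1 * (lam 1 - lam 0) := by
  simp only [cap, Fin.sum_univ_two, show (0 : Fin 2).rev = 1 from rfl,
    show (1 : Fin 2).rev = 0 from rfl]

theorem cap_antisymm_four (lam : Fin 4 → ℝ) (a b : ℝ) :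
    cap lam ![a, b, -b, -a] = 2 * (a * (lam 0 - lam 3) + b * (lam 1 - lam 2)) := by
  simp only [cap, Fin.sum_univ_four, Matrix.cons_val, show (0 : Fin 4).rev = 3 from rfl,
    show (1 : Fin 4).rev = 2 from rfl, show (2 : Fin 4).rev = 1 from rfl,
    show (3 : Fin 4).rev = 0 from rfl]
  ring

theorem isHermitian_smul_σ3 (e : ℝ) : ((e : ℂ) • σ3).IsHermitian := by
  refine IsHermitian.ext fun i j => ?_
  fin_cases i <;> fin_cases j <;> simp [σ3]

theorem Cap_smul_σ3_of_offDiag_eq_zero {M : Matrix (Fin 2) (Fin 2) ℂ} (hM : M.IsHermitian)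
    (h01 : M 0 1 = 0) {e : ℝ} (he : 0 ≤ e) :
    Cap M ((e : ℂ) • σ3) = 2 * e * |(M 0 0).re - (M 1 1).re| := by
  have hσ : ![(((e : ℂ) • σ3) 0 0).re, (((e : ℂ) • σ3) 1 1).re] = ![e, -e] := by simp [σ3]
  rw [Cap, dif_pos hM, dif_pos (isHermitian_smul_σ3 e),
    eigsDesc_eq_dsort_of_offDiag_eq_zero hM h01,
    eigsDesc_eq_dsort_of_offDiag_eq_zero _ (by simp [σ3]), hσ, dsort_pair, dsort_pair,
    max_eq_left (neg_le_self he), min_eq_right (neg_le_self he), ← max_sub_min_eq_abs']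
  refine (cap_two _ _).trans ?_
  simp only [Matrix.cons_val_zero, Matrix.cons_val_one]
  ring

theorem isHermitian_HAB (eA eB g : ℝ) : (HAB eA eB g).IsHermitian := by
  refine IsHermitian.ext fun i j => ?_
  fin_cases i <;> fin_cases j <;> simp [HAB, σ1, σ3, kroneckerMap_apply, one_apply]

theorem isXShaped_HAB (eA eB g : ℝ) : IsXShaped (HAB eA eB g) := by
  intro i j hij
  fin_cases i <;> fin_cases j <;> simp_all [HAB, σ1, σ3, kroneckerMap_apply, one_apply]

theorem xSpectrum_HAB (eA eB g : ℝ) :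
    xSpectrum (HAB eA eB g) = ![√((eA + eB) ^ 2 + g ^ 2), -√((eA + eB) ^ 2 + g ^ 2),
      √((eA - eB) ^ 2 + g ^ 2), -√((eA - eB) ^ 2 + g ^ 2)] := by
  have h00 : HAB eA eB g (0, 0) (0, 0) = ((eA + eB : ℝ) : ℂ) := by simp [HAB, σ3, σ1]
  have h11 : HAB eA eB g (1, 1) (1, 1) = ((-(eA + eB) : ℝ) : ℂ) := by
    simp [HAB, σ3, σ1]
    ring
  have h01 : HAB eA eB g (0, 1) (0, 1) = ((eA - eB : ℝ) : ℂ) := by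
    simp [HAB, σ3, σ1]
    ring
  have h10 : HAB eA eB g (1, 0) (1, 0) = ((-(eA - eB) : ℝ) : ℂ) := by
    simp [HAB, σ3, σ1]
    ring
  have hz : HAB eA eB g (0, 0) (1, 1) = g := by simp [HAB, σ3, σ1]
  have hy : HAB eA eB g (0, 1) (1, 0) = g := by simp [HAB, σ3, σ1]
  simp only [xSpectrum, h00, h11, h01, h10, hz, hy, Complex.ofReal_re, eigRadius_neg,
    Complex.normSq_ofReal, add_neg_cancel, zero_div, zero_add, zero_sub, ← sq]

theorem eigsDesc_HAB {eA eB : ℝ} (hA : 0 ≤ eA) (hB : 0 ≤ eB) (g : ℝ) :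
    eigsDesc (isHermitian_HAB eA eB g) = ![√((eA + eB) ^ 2 + g ^ 2), √((eA - eB) ^ 2 + g ^ 2),
      -√((eA - eB) ^ 2 + g ^ 2), -√((eA + eB) ^ 2 + g ^ 2)] := by
  set s₀ := √((eA + eB) ^ 2 + g ^ 2)
  set s₁ := √((eA - eB) ^ 2 + g ^ 2)
  have hs₁ : 0 ≤ s₁ := Real.sqrt_nonneg _
  have hs : s₁ ≤ s₀ := Real.sqrt_le_sqrt (by nlinarith [mul_nonneg hA hB])
  have hperm : (List.ofFn ![s₀, -s₀, s₁, -s₁]).Perm (List.ofFn ![s₀, s₁, -s₁, -s₀]) := by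
    simpa using (List.perm_append_comm (l₁ := [-s₀]) (l₂ := [s₁, -s₁])).cons s₀
  have hanti : Antitone ![s₀, s₁, -s₁, -s₀] := by
    intro i j hij
    fin_cases i <;> fin_cases j <;> simp_all <;> linarith
  rw [eigsDesc_eq_dsort_xSpectrum _ (isXShaped_HAB eA eB g), xSpectrum_HAB, dsort_congr hperm,
    dsort_eq_self hanti]

theorem Cap_HAB {M : Matrix (Fin 2 × Fin 2) (Fin 2 × Fin 2) ℂ} (hM : M.IsHermitian)
    (hX : IsXShaped M) {eA eB : ℝ} (hA : 0 ≤ eA) (hB : 0 ≤ eB) (g : ℝ) :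
    Cap M (HAB eA eB g) =
      2 * (√((eA + eB) ^ 2 + g ^ 2) * (dsort (xSpectrum M) 0 - dsort (xSpectrum M) 3) +
        √((eA - eB) ^ 2 + g ^ 2) * (dsort (xSpectrum M) 1 - dsort (xSpectrum M) 2)) := by
  rw [Cap, dif_pos hM, dif_pos (isHermitian_HAB eA eB g), eigsDesc_HAB hA hB,
    eigsDesc_eq_dsort_xSpectrum hM hX]
  exact cap_antisymm_four _ _ _

theorem mul_abs_add_add_mul_abs_sub_le {a b : ℝ} (hb : 0 ≤ b) (hab : b ≤ a) (u v : ℝ) :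
    a * |u + v| + b * |u - v| ≤ (a + b) * max |u| |v| + (a - b) * min |u| |v| := by
  wlog h : |u| ≤ |v| generalizing u v
  · simpa [add_comm, abs_sub_comm, max_comm, min_comm] using this v u (le_of_not_ge h)
  rw [max_eq_right h, min_eq_left h]
  rcases abs_cases u with ⟨hu, _⟩ | ⟨hu, _⟩ <;> rcases abs_cases v with ⟨hv, _⟩ | ⟨hv, _⟩ <;>
    rcases abs_cases (u + v) with ⟨h1, _⟩ | ⟨h1, _⟩ <;>
    rcases abs_cases (u - v) with ⟨h2, _⟩ | ⟨h2, _⟩ <;>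
    simp only [hu, hv, h1, h2] at h ⊢ <;> nlinarith

theorem mul_max_add_mul_min_le {a b D E G₀ G₁ : ℝ} (hb : 0 ≤ b) (hab : b ≤ a) (hD : D ≤ G₀)
    (hE : E ≤ G₀) (hDE : D + E ≤ G₀ + G₁) : a * max D E + b * min D E ≤ a * G₀ + b * G₁ := by
  nlinarith [max_add_min D E, max_le hD hE]

theorem le_Cap_HAB {M : Matrix (Fin 2 × Fin 2) (Fin 2 × Fin 2) ℂ} (hM : M.IsHermitian)
    (hX : IsXShaped M) {eA eB : ℝ} (hB : 0 ≤ eB) (hAB : eB ≤ eA) (g : ℝ) :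
    2 * ((eA + eB) * max |(M (0, 0) (0, 0)).re - (M (1, 1) (1, 1)).re|
        |(M (0, 1) (0, 1)).re - (M (1, 0) (1, 0)).re| +
      (eA - eB) * min |(M (0, 0) (0, 0)).re - (M (1, 1) (1, 1)).re|
        |(M (0, 1) (0, 1)).re - (M (1, 0) (1, 0)).re|) ≤ Cap M (HAB eA eB g) := by
  set D := |(M (0, 0) (0, 0)).re - (M (1, 1) (1, 1)).re|
  set E := |(M (0, 1) (0, 1)).re - (M (1, 0) (1, 0)).re|
  set w := xSpectrum M
  set s₀ := √((eA + eB) ^ 2 + g ^ 2)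
  set s₁ := √((eA - eB) ^ 2 + g ^ 2)
  have hD : D ≤ w 0 - w 1 := by
    have := abs_sub_le_two_mul_eigRadius (M (0, 0) (0, 0)).re (M (1, 1) (1, 1)).re (M (0, 0) (1, 1))
    simp only [w, xSpectrum, Matrix.cons_val]
    linarith
  have hE : E ≤ w 2 - w 3 := by
    have := abs_sub_le_two_mul_eigRadius (M (0, 1) (0, 1)).re (M (1, 0) (1, 0)).re (M (0, 1) (1, 0))
    simp only [w, xSpectrum, Matrix.cons_val]
    linarith
  have hDG : D ≤ dsort w 0 - dsort w 3 := hD.trans (sub_le_dsort_zero_sub_dsort_rev_zero w 0 1)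
  have hEG : E ≤ dsort w 0 - dsort w 3 := hE.trans (sub_le_dsort_zero_sub_dsort_rev_zero w 2 3)
  have hDEG : D + E ≤ (dsort w 0 - dsort w 3) + (dsort w 1 - dsort w 2) := by
    have := add_sub_add_le_dsort w (i := 0) (j := 2) (k := 1) (l := 3) (by decide) (by decide)
    change _ ≤ dsort w 0 + dsort w 1 - (dsort w 2 + dsort w 3) at this
    linarith
  have hs₀ : eA + eB ≤ s₀ :=
    (le_abs_self _).trans (Real.abs_le_sqrt (le_add_of_nonneg_right (sq_nonneg g)))
  have hs₁ : eA - eB ≤ s₁ :=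
    (le_abs_self _).trans (Real.abs_le_sqrt (le_add_of_nonneg_right (sq_nonneg g)))
  have hs : s₁ ≤ s₀ := Real.sqrt_le_sqrt (by nlinarith)
  rw [Cap_HAB hM hX (hB.trans hAB) hB]
  calc _ ≤ 2 * (s₀ * max D E + s₁ * min D E) := by
        gcongr
    _ ≤ 2 * (s₀ * (dsort w 0 - dsort w 3) + s₁ * (dsort w 1 - dsort w 2)) := by
        gcongr 2 * ?_
        exact mul_max_add_mul_min_le (Real.sqrt_nonneg _) hs hDG hEG hDEG

theorem Matrix.IsHermitian.ptA {ρ : Matrix (Fin 2 × Fin 2) (Fin 2 × Fin 2) ℂ}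
    (hρ : ρ.IsHermitian) : (ptA ρ).IsHermitian :=
  IsHermitian.ext fun i j => by
    change star (∑ b, ρ (j, b) (i, b)) = ∑ b, ρ (i, b) (j, b)
    simp only [star_sum, hρ.apply]

theorem Matrix.IsHermitian.ptB {ρ : Matrix (Fin 2 × Fin 2) (Fin 2 × Fin 2) ℂ}
    (hρ : ρ.IsHermitian) : (ptB ρ).IsHermitian :=
  IsHermitian.ext fun i j => by
    change star (∑ a, ρ (a, j) (a, i)) = ∑ a, ρ (a, i) (a, j)
    simp only [star_sum, hρ.apply]

theorem IsXShaped.ptA_apply_zero_one {ρ : Matrix (Fin 2 × Fin 2) (Fin 2 × Fin 2) ℂ}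
    (hX : IsXShaped ρ) : ptA ρ 0 1 = 0 := by
  simp [ptA, hX.apply_eq_zero]

theorem IsXShaped.ptB_apply_zero_one {ρ : Matrix (Fin 2 × Fin 2) (Fin 2 × Fin 2) ℂ}
    (hX : IsXShaped ρ) : ptB ρ 0 1 = 0 := by
  simp [ptB, hX.apply_eq_zero]

theorem capacity_monogamy_two_qubit_X_general (ρ : Matrix (Fin 2 × Fin 2) (Fin 2 × Fin 2) ℂ)
    (hρ : ρ.PosSemidef)
    (hX : ∀ i j : Fin 2 × Fin 2, ρ i j ≠ 0 → i = j ∨ (i.1 ≠ j.1 ∧ i.2 ≠ j.2))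
    (eA eB g : ℝ) (hAB : eA ≥ eB) (hB : eB ≥ 0) :
    Cap (ptA ρ) ((eA : ℂ) • σ3) + Cap (ptB ρ) ((eB : ℂ) • σ3) ≤
      Cap ρ (HAB eA eB g) := by
  have hXρ : IsXShaped ρ := hX
  set u := (ρ (0, 0) (0, 0)).re - (ρ (1, 1) (1, 1)).re
  set v := (ρ (0, 1) (0, 1)).re - (ρ (1, 0) (1, 0)).re
  have hu : (ptA ρ 0 0).re - (ptA ρ 1 1).re = u + v := by
    simp only [ptA, Fin.sum_univ_two, Complex.add_re, u, v]
    ring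
  have hv : (ptB ρ 0 0).re - (ptB ρ 1 1).re = u - v := by
    simp only [ptB, Fin.sum_univ_two, Complex.add_re, u, v]
    ring
  rw [Cap_smul_σ3_of_offDiag_eq_zero hρ.isHermitian.ptA hXρ.ptA_apply_zero_one (hB.trans hAB),
    Cap_smul_σ3_of_offDiag_eq_zero hρ.isHermitian.ptB hXρ.ptB_apply_zero_one hB, hu, hv]
  calc 2 * eA * |u + v| + 2 * eB * |u - v|
      ≤ 2 * ((eA + eB) * max |u| |v| + (eA - eB) * min |u| |v|) := by
        linarith [mul_abs_add_add_mul_abs_sub_le hB hAB u v]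
    _ ≤ Cap ρ (HAB eA eB g) := le_Cap_HAB hρ.isHermitian hXρ hB hAB g

/-- Theorem 1: monogamy of battery capacity for two-qubit X-states. -/
theorem capacity_monogamy_two_qubit_X (ρ : Matrix (Fin 2 × Fin 2) (Fin 2 × Fin 2) ℂ)
    (hρ : ρ.PosSemidef) (htr : ρ.trace = 1)
    (hX : ∀ i j : Fin 2 × Fin 2, ρ i j ≠ 0 → i = j ∨ (i.1 ≠ j.1 ∧ i.2 ≠ j.2))
    (eA eB g : ℝ) (hAB : eA ≥ eB) (hB : eB ≥ 0) (hg : 0 ≤ g) :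
    Cap (ptA ρ) ((eA : ℂ) • σ3) + Cap (ptB ρ) ((eB : ℂ) • σ3) ≤
      Cap ρ (HAB eA eB g) :=
  capacity_monogamy_two_qubit_X_general ρ hρ hX eA eB g hAB hB
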